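/- Let A₁, B₁, C₁ be a non-overlapping Napoleon configuration for a nondegenerate triangle ABC in the Euclidean plane, let A₂ and B₂ be the midpoints of B₁C₁ and C₁A₁, and let C* = (A₂+B₂+C)/3 be the centroid of the equilateral triangle A₂B₂C. Let C₁' be the apex of the equilateral triangle on side AB lying strictly on the same side of line AB as C (dist A C₁' = dist B C₁' = dist A B), and let G₃' = (A+B+C₁')/3 be its centroid. Then C* is the image of G₃' under the homothety with center G = (A+B+C)/3 and ratio −1/2: C* − G = −(1/2)·(G₃' − G). -/

import Mathlib

/-!
Fix an orientation of the plane, with area form `ω` and right-angle rotation `J`. The apex of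
an equilateral triangle erected on `XY` is `(X + Y) / 2 + t • J (Y - X)` with `t ^ 2 = 3 / 4`, and
the sign of `t` is opposite to that of `ω (Y - X) (Q - X)` for any `Q` on the other side of `XY`.
As `ω (C - B) (A - B) = ω (A - C) (B - C) = ω (B - A) (C - A)`, the three outer apexes share one
parameter `t`, while `C₁'` has parameter `-t`. The claim is then a linear identity in
`A, B, C, J A, J B, J C`.
-/

open Module
open scoped RealInnerProductSpace

theorem eq_of_sq_eq_sq_of_mul_neg {a b d : ℝ} (hab : a ^ 2 = b ^ 2) (ha : a * d < 0)
    (hb : b * d < 0) : a = b :=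
  (sq_eq_sq_iff_eq_or_eq_neg.1 hab).resolve_right fun h => by
    rw [h, neg_mul] at ha
    linarith

namespace Orientation

variable {V : Type*} [NormedAddCommGroup V] [InnerProductSpace ℝ V] [Fact (finrank ℝ V = 2)]
  (o : Orientation ℝ V (Fin 2))

local notation "ω" => o.areaForm
local notation "J" => o.rightAngleRotation

theorem norm_sq_smul_eq_inner_smul_add_areaForm_smul (a x : V) :
    ‖a‖ ^ 2 • x = ⟪a, x⟫ • a + ω a x • J a := by
  refine ext_inner_right ℝ fun y => ?_
  simp only [inner_add_left, real_inner_smul_left, inner_rightAngleRotation_left]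
  rw [o.inner_mul_inner_add_areaForm_mul_areaForm]

theorem mem_affineSpan_pair_iff_areaForm_eq_zero {X Y p : V} (h : X ≠ Y) :
    p ∈ line[ℝ, X, Y] ↔ ω (Y - X) (p - X) = 0 := by
  conv_lhs => rw [← vsub_vadd p X]
  simp only [vadd_left_mem_affineSpan_pair, vsub_eq_sub]
  constructor
  · rintro ⟨r, hr⟩
    rw [← hr, map_smul, areaForm_apply_self, smul_zero]
  · intro h0
    have hv : ‖Y - X‖ ^ 2 ≠ 0 := by simpa [sub_eq_zero] using h.symm
    refine ⟨‖Y - X‖⁻¹ ^ 2 * ⟪Y - X, p - X⟫, ?_⟩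
    have := o.norm_sq_smul_eq_inner_smul_add_areaForm_smul (Y - X) (p - X)
    rw [h0, zero_smul, add_zero] at this
    rw [mul_smul, ← this, inv_pow, inv_smul_smul₀ hv]

theorem areaForm_mul_areaForm_neg_of_sOppSide {X Y p q : V} (h : X ≠ Y)
    (hpq : line[ℝ, X, Y].SOppSide p q) : ω (Y - X) (p - X) * ω (Y - X) (q - X) < 0 := by
  have hp : ω (Y - X) (p - X) ≠ 0 := fun h0 =>
    hpq.left_notMem ((o.mem_affineSpan_pair_iff_areaForm_eq_zero h).2 h0)
  have hq : ω (Y - X) (q - X) ≠ 0 := fun h0 =>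
    hpq.right_notMem ((o.mem_affineSpan_pair_iff_areaForm_eq_zero h).2 h0)
  obtain ⟨z, hz, ⟨r, ⟨hr0, hr1⟩, rfl⟩, -, -⟩ := hpq.exists_sbtw
  have hcomb : (1 - r) * ω (Y - X) (p - X) + r * ω (Y - X) (q - X) = 0 := by
    rw [← (o.mem_affineSpan_pair_iff_areaForm_eq_zero h).1 hz, AffineMap.lineMap_apply]
    simp only [vsub_eq_sub, vadd_eq_add, map_add, map_sub, map_smul, smul_eq_mul]
    ring
  have hr : 0 < r := hr0.lt_of_ne fun h0 => hp (by simpa [← h0] using hcomb)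
  set a := ω (Y - X) (p - X)
  set b := ω (Y - X) (q - X)
  have hprod : (1 - r) * (a * b) = -(r * b ^ 2) := by linear_combination b * hcomb
  by_contra! hab
  linarith [mul_nonneg (sub_nonneg.2 hr1) hab, mul_pos hr (sq_pos_of_ne_zero hq)]

theorem areaForm_midpoint_add_smul_rightAngleRotation (X Y : V) (t : ℝ) :
    ω (Y - X) ((2 : ℝ)⁻¹ • (X + Y) + t • J (Y - X) - X) = t * ‖Y - X‖ ^ 2 := by
  rw [show (2 : ℝ)⁻¹ • (X + Y) + t • J (Y - X) - X = (2 : ℝ)⁻¹ • (Y - X) + t • J (Y - X) by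
    module]
  simp only [map_add, map_smul, areaForm_apply_self, areaForm_rightAngleRotation_right,
    real_inner_self_eq_norm_sq, smul_eq_mul]
  ring

theorem exists_eq_midpoint_add_smul_rightAngleRotation_of_dist_eq {X Y P : V}
    (hX : dist P X = dist X Y) (hY : dist P Y = dist X Y) :
    ∃ t : ℝ, t ^ 2 = 3 / 4 ∧ P = (2 : ℝ)⁻¹ • (X + Y) + t • J (Y - X) := by
  obtain ⟨v, rfl⟩ : ∃ v, Y = X + v := ⟨Y - X, (add_sub_cancel X Y).symm⟩
  obtain ⟨w, rfl⟩ : ∃ w, P = (2 : ℝ)⁻¹ • (X + (X + v)) + w := ⟨_, (add_sub_cancel _ P).symm⟩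
  rw [add_sub_cancel_left]
  rcases eq_or_ne v 0 with rfl | hv
  · refine ⟨√3 / 2, by rw [div_pow, Real.sq_sqrt (by norm_num)]; norm_num, ?_⟩
    rw [add_zero, dist_self, dist_eq_zero] at hX
    rw [map_zero, smul_zero, add_zero, add_zero, hX]
    module
  simp only [dist_eq_norm] at hX hY
  rw [show (2 : ℝ)⁻¹ • (X + (X + v)) + w - X = w + (2 : ℝ)⁻¹ • v by module,
    show X - (X + v) = -v by abel, norm_neg] at hX
  rw [show (2 : ℝ)⁻¹ • (X + (X + v)) + w - (X + v) = w - (2 : ℝ)⁻¹ • v by module,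
    show X - (X + v) = -v by abel, norm_neg] at hY
  have h₁ := congrArg (· ^ 2) hX
  have h₂ := congrArg (· ^ 2) hY
  simp only [norm_add_sq_real, norm_sub_sq_real, norm_smul, real_inner_smul_right, norm_inv,
    Real.norm_ofNat] at h₁ h₂
  have hperp : ⟪v, w⟫ = 0 := by rw [real_inner_comm]; linarith
  have hw : ‖w‖ ^ 2 = 3 / 4 * ‖v‖ ^ 2 := by linarith
  have hv2 : ‖v‖ ^ 2 ≠ 0 := by positivity
  have hdecomp := o.norm_sq_smul_eq_inner_smul_add_areaForm_smul v w
  rw [hperp, zero_smul, zero_add] at hdecomp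
  refine ⟨ω v w / ‖v‖ ^ 2, ?_, ?_⟩
  · have := o.inner_sq_add_areaForm_sq v w
    rw [hperp, hw] at this
    rw [div_pow, ← pow_mul, div_eq_iff (by positivity)]
    linear_combination this
  · rw [div_eq_inv_mul, mul_smul, ← hdecomp, inv_smul_smul₀ hv2]

theorem mul_areaForm_neg_of_sOppSide {X Y Q : V} {t : ℝ}
    (h : line[ℝ, X, Y].SOppSide Q ((2 : ℝ)⁻¹ • (X + Y) + t • J (Y - X))) :
    t * ω (Y - X) (Q - X) < 0 := by
  have hXY : X ≠ Y := by
    rintro rfl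
    refine h.right_notMem ?_
    rw [sub_self, map_zero, smul_zero, add_zero, ← two_smul ℝ X, smul_smul,
      inv_mul_cancel₀ two_ne_zero, one_smul]
    exact left_mem_affineSpan_pair ℝ X X
  have := o.areaForm_mul_areaForm_neg_of_sOppSide hXY h
  rw [areaForm_midpoint_add_smul_rightAngleRotation, ← mul_assoc, mul_comm _ t] at this
  exact neg_of_mul_neg_left this (by positivity)

theorem areaForm_sub_sub_rotate (X Y Z : V) : ω (Y - X) (Z - X) = ω (Z - Y) (X - Y) := by
  simp only [map_sub, LinearMap.sub_apply, areaForm_apply_self]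
  rw [o.areaForm_swap Z X, o.areaForm_swap Y X, o.areaForm_swap Z Y]
  ring

end Orientation

theorem centroid_midpoints_sub_centroid_eq_neg_half_smul {V F : Type*} [AddCommGroup V]
    [Module ℝ V] [FunLike F V V] [AddMonoidHomClass F V V] (J : F) (t : ℝ)
    {A B C A₁ B₁ C₁ C₁' : V}
    (hA₁ : A₁ = (2 : ℝ)⁻¹ • (B + C) + t • J (C - B))
    (hB₁ : B₁ = (2 : ℝ)⁻¹ • (C + A) + t • J (A - C))
    (hC₁ : C₁ = (2 : ℝ)⁻¹ • (A + B) + t • J (B - A))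
    (hC₁' : C₁' = (2 : ℝ)⁻¹ • (A + B) + (-t) • J (B - A)) :
    (3 : ℝ)⁻¹ • ((2 : ℝ)⁻¹ • (B₁ + C₁) + (2 : ℝ)⁻¹ • (C₁ + A₁) + C) - (3 : ℝ)⁻¹ • (A + B + C) =
      (-(1 / 2) : ℝ) • ((3 : ℝ)⁻¹ • (A + B + C₁') - (3 : ℝ)⁻¹ • (A + B + C)) := by
  subst hA₁ hB₁ hC₁ hC₁'
  simp only [map_sub]
  module

theorem napoleon_homothety_single_general
    (A B C A₁ B₁ C₁ C₁' : EuclideanSpace ℝ (Fin 2))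
    (hA₁ : dist A₁ B = dist B C) (hA₁' : dist A₁ C = dist B C)
    (hB₁ : dist A B₁ = dist A C) (hB₁' : dist B₁ C = dist A C)
    (hC₁ : dist A C₁ = dist A B) (hC₁' : dist B C₁ = dist A B)
    (hsideA : (affineSpan ℝ {B, C}).SOppSide A A₁)
    (hsideB : (affineSpan ℝ {C, A}).SOppSide B B₁)
    (hsideC : (affineSpan ℝ {A, B}).SOppSide C C₁)
    (hC₁'dA : dist A C₁' = dist A B) (hC₁'dB : dist B C₁' = dist A B)
    (hC₁'side : (affineSpan ℝ {A, B}).SSameSide C₁' C)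
    (A₂ B₂ Cstar G₃' G : EuclideanSpace ℝ (Fin 2))
    (hA₂ : A₂ = (2:ℝ)⁻¹ • (B₁ + C₁))
    (hB₂ : B₂ = (2:ℝ)⁻¹ • (C₁ + A₁))
    (hCstar : Cstar = (3:ℝ)⁻¹ • (A₂ + B₂ + C))
    (hG₃' : G₃' = (3:ℝ)⁻¹ • (A + B + C₁'))
    (hG : G = (3:ℝ)⁻¹ • (A + B + C)) :
    Cstar - G = (-(1/2) : ℝ) • (G₃' - G) := by
  have : Fact (finrank ℝ (EuclideanSpace ℝ (Fin 2)) = 2) := ⟨finrank_euclideanSpace_fin⟩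
  let o : Orientation ℝ (EuclideanSpace ℝ (Fin 2)) (Fin 2) :=
    (EuclideanSpace.basisFun (Fin 2) ℝ).toBasis.orientation
  obtain ⟨ta, hta, rfl⟩ :=
    o.exists_eq_midpoint_add_smul_rightAngleRotation_of_dist_eq hA₁ hA₁'
  obtain ⟨tb, htb, rfl⟩ := o.exists_eq_midpoint_add_smul_rightAngleRotation_of_dist_eq
    (X := C) (Y := A) (P := B₁) (by rwa [dist_comm C]) (by rwa [dist_comm C, dist_comm B₁])
  obtain ⟨tc, htc, rfl⟩ := o.exists_eq_midpoint_add_smul_rightAngleRotation_of_dist_eq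
    (X := A) (Y := B) (P := C₁) (by rwa [dist_comm]) (by rwa [dist_comm])
  obtain ⟨t', ht', rfl⟩ := o.exists_eq_midpoint_add_smul_rightAngleRotation_of_dist_eq
    (X := A) (Y := B) (P := C₁') (by rwa [dist_comm]) (by rwa [dist_comm])
  have hsa := o.mul_areaForm_neg_of_sOppSide hsideA
  have hsb := o.mul_areaForm_neg_of_sOppSide hsideB
  have hsc := o.mul_areaForm_neg_of_sOppSide hsideC
  have hs' := o.mul_areaForm_neg_of_sOppSide (hC₁'side.trans_sOppSide hsideC)
  rw [o.areaForm_sub_sub_rotate B, o.areaForm_sub_sub_rotate C] at hsa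
  rw [o.areaForm_sub_sub_rotate C] at hsb
  rw [o.areaForm_midpoint_add_smul_rightAngleRotation, ← mul_assoc] at hs'
  obtain rfl : tb = ta := eq_of_sq_eq_sq_of_mul_neg (htb.trans hta.symm) hsb hsa
  obtain rfl : tc = tb := eq_of_sq_eq_sq_of_mul_neg (htc.trans htb.symm) hsc hsb
  have htct' : tc * t' < 0 := neg_of_mul_neg_left hs' (by positivity)
  obtain rfl : t' = -tc := eq_of_sq_eq_sq_of_mul_neg (by rw [ht', neg_sq, htc])
    (by rwa [mul_comm]) (by rw [neg_mul, ← sq, htc]; norm_num)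
  subst hA₂ hB₂ hCstar hG₃' hG
  exact
    centroid_midpoints_sub_centroid_eq_neg_half_smul o.rightAngleRotation tc rfl rfl rfl rfl

theorem napoleon_homothety_single
    (A B C A₁ B₁ C₁ C₁' : EuclideanSpace ℝ (Fin 2))
    (hABC : AffineIndependent ℝ ![A, B, C])
    (hA₁ : dist A₁ B = dist B C) (hA₁' : dist A₁ C = dist B C)
    (hB₁ : dist A B₁ = dist A C) (hB₁' : dist B₁ C = dist A C)
    (hC₁ : dist A C₁ = dist A B) (hC₁' : dist B C₁ = dist A B)
    (hsideA : (affineSpan ℝ {B, C}).SOppSide A A₁)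
    (hsideB : (affineSpan ℝ {C, A}).SOppSide B B₁)
    (hsideC : (affineSpan ℝ {A, B}).SOppSide C C₁)
    (hC₁'dA : dist A C₁' = dist A B) (hC₁'dB : dist B C₁' = dist A B)
    (hC₁'side : (affineSpan ℝ {A, B}).SSameSide C₁' C)
    (A₂ B₂ Cstar G₃' G : EuclideanSpace ℝ (Fin 2))
    (hA₂ : A₂ = (2:ℝ)⁻¹ • (B₁ + C₁))
    (hB₂ : B₂ = (2:ℝ)⁻¹ • (C₁ + A₁))
    (hCstar : Cstar = (3:ℝ)⁻¹ • (A₂ + B₂ + C))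
    (hG₃' : G₃' = (3:ℝ)⁻¹ • (A + B + C₁'))
    (hG : G = (3:ℝ)⁻¹ • (A + B + C)) :
    Cstar - G = (-(1/2) : ℝ) • (G₃' - G) :=
  napoleon_homothety_single_general A B C A₁ B₁ C₁ C₁' hA₁ hA₁' hB₁ hB₁' hC₁ hC₁' hsideA hsideB
    hsideC hC₁'dA hC₁'dB hC₁'side A₂ B₂ Cstar G₃' G hA₂ hB₂ hCstar hG₃' hG
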